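/- arXiv:1002.2419 — 3 statements merged into one kernel-verified Lean document; each statement's English description precedes it below -/
import Mathlib

section
/- Let P be an ergodic reversible Markov chain on X with stationary distribution π, M ⊆ X marked, p_M = Σ_{x∈M} π_x, and P(s) = (1-s)P + sP' the interpolation with the absorbing chain P'. Then the vector π(s) defined by π(s)_x = (1-s)π_x / (1 - (1-s)p_M) for x ∉ M and π(s)_x = π_x / (1 - (1-s)p_M) for x ∈ M is a stationary distribution of P(s), i.e., π(s) P(s) = π(s). -/
open Finset Matrix

/-- the vector `π(s)` with entries `(1-s)π_x / (1-(1-s)p_M)` on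
unmarked states and `π_x / (1-(1-s)p_M)` on marked states is a stationary
distribution of the interpolated chain `P(s) = (1-s)P + sP'`. -/
theorem interpolation_stationary_distribution
    {X : Type*} [Fintype X] [DecidableEq X]
    (P : Matrix X X ℝ) (π : X → ℝ) (M : Finset X)
    (hnn : ∀ x y, 0 ≤ P x y) (hrow : ∀ x, ∑ y, P x y = 1)
    (herg : ∃ k : ℕ, 0 < k ∧ ∀ x y, 0 < (P ^ k) x y)
    (hπpos : ∀ x, 0 < π x) (hπsum : ∑ x, π x = 1)
    (hrev : ∀ x y, π x * P x y = π y * P y x)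
    (hpM : ∑ x ∈ M, π x < 1)
    (P' : Matrix X X ℝ)
    (hP' : ∀ x y, P' x y = if x ∈ M then (if x = y then (1:ℝ) else 0) else P x y)
    (s : ℝ) (hs : s ∈ Set.Icc (0:ℝ) 1) :
    let pM : ℝ := ∑ x ∈ M, π x
    let πs : X → ℝ := fun x =>
      (if x ∈ M then π x else (1 - s) * π x) / (1 - (1 - s) * pM)
    ∀ y, ∑ x, πs x * ((1 - s) • P + s • P') x y = πs y := by
  intro pM πs y
  have hstat : ∑ x, π x * P x y = π y := by
    simp_rw [hrev]
    rw [← Finset.mul_sum, hrow, mul_one]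
  have key : ∑ x, (if x ∈ M then π x else (1 - s) * π x) * ((1 - s) * P x y + s * P' x y)
      = (if y ∈ M then π y else (1 - s) * π y) := by
    have hterm : ∀ x, (if x ∈ M then π x else (1 - s) * π x) * ((1 - s) * P x y + s * P' x y)
        = (1 - s) * (π x * P x y) + s * (if x ∈ M then (if x = y then π x else 0) else 0) := by
      intro x
      rw [hP']
      by_cases hx : x ∈ M
      · by_cases hxy : x = y
        · subst hxy; simp [hx]; ring
        · simp [hx, hxy]; ring
      · simp only [hx, if_false]
        ring
    simp_rw [hterm]
    rw [Finset.sum_add_distrib, ← Finset.mul_sum, ← Finset.mul_sum, hstat]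
    have : ∑ x, (if x ∈ M then (if x = y then π x else 0) else 0)
        = if y ∈ M then π y else 0 := by
      rw [Finset.sum_ite_mem, Finset.univ_inter, Finset.sum_ite_eq' M y π]
    rw [this]
    by_cases hy : y ∈ M <;> simp [hy] <;> ring
  simp only [πs, Matrix.add_apply, Matrix.smul_apply, smul_eq_mul]
  simp_rw [div_mul_eq_mul_div, ← Finset.sum_div, key]
end

section
/- Let D(s) be the discriminant of the interpolated chain P(s) = (1-s)P + sP' for a reversible Markov chain P with absorbing version P' on marked set M, and let Π_M be the orthogonal projector onto the coordinates indexed by M. Then for s ∈ [0,1), the derivative of D(s) with respect to s satisfies dD/ds = (1/(2(1-s))) · {Π_M, I - D(s)}, where {A,B} = AB + BA is the anticommutator. -/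
/-!
Write `a_u(x) = √(1 - u)` for marked `x` and `a_u(x) = 1` otherwise. Entrywise,
`I - D(u) = diag(a_u) (I - D(0)) diag(a_u)`: off the diagonal each marked endpoint contributes a
factor `1 - u` to `P(u)_{xy} P(u)_{yx}`, and on a marked diagonal entry
`1 - ((1 - u) P_{xx} + u) = (1 - u)(1 - P_{xx})`.
Since `a_u'(x) = -(1_M(x) / (2(1 - u))) a_u(x)`, differentiating gives
`dD/du_{xy} = (1_M(x) + 1_M(y)) / (2(1 - u)) · (I - D(u))_{xy}`, which is the anticommutator
with the diagonal projector `Π_M`.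
-/

open Matrix

noncomputable section

variable {X : Type*} [DecidableEq X]

theorem diagonal_mul_add_mul_diagonal_apply [Fintype X] {R : Type*} [CommSemiring R] (d : X → R)
    (B : Matrix X X R) (x y : X) :
    (diagonal d * B + B * diagonal d) x y = (d x + d y) * B x y := by
  simp only [Matrix.add_apply, diagonal_mul, mul_diagonal]
  ring

/-- The chain `P(u) = (1 - u) P + u P'`, where `P'` makes the states of `M` absorbing. -/
def interpolatedChain (P : Matrix X X ℝ) (M : Finset X) (u : ℝ) : Matrix X X ℝ :=
  of fun x y => if x ∈ M then (1 - u) * P x y + (if x = y then u else 0) else P x y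

def discriminant (Q : Matrix X X ℝ) : Matrix X X ℝ :=
  of fun x y => √(Q x y * Q y x)

def markedScale (M : Finset X) (u : ℝ) (x : X) : ℝ :=
  if x ∈ M then √(1 - u) else 1

theorem discriminant_interpolatedChain_of_ne (P : Matrix X X ℝ) (M : Finset X) {u : ℝ}
    (hu : u ≤ 1) {x y : X} (hxy : x ≠ y) :
    discriminant (interpolatedChain P M u) x y
      = markedScale M u x * markedScale M u y * discriminant P x y := by
  have h1u : 0 ≤ 1 - u := by linarith
  by_cases hx : x ∈ M <;> by_cases hy : y ∈ M <;>
    simp only [discriminant, interpolatedChain, markedScale, of_apply, hx, hy, hxy, hxy.symm,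
      if_true, if_false, add_zero, one_mul, mul_one]
  · rw [show (1 - u) * P x y * ((1 - u) * P y x) = (1 - u) * (1 - u) * (P x y * P y x) by ring,
      Real.sqrt_mul (mul_self_nonneg _), Real.sqrt_mul_self h1u, Real.mul_self_sqrt h1u]
  · rw [mul_assoc, Real.sqrt_mul h1u]
  · rw [mul_left_comm, Real.sqrt_mul h1u, mul_comm]

theorem one_sub_discriminant_interpolatedChain_diag (P : Matrix X X ℝ) (M : Finset X) {u : ℝ}
    (hu : u ∈ Set.Icc (0 : ℝ) 1) {x : X} (hP : 0 ≤ P x x) :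
    1 - discriminant (interpolatedChain P M u) x x
      = markedScale M u x * markedScale M u x * (1 - discriminant P x x) := by
  by_cases hx : x ∈ M <;>
    simp only [discriminant, interpolatedChain, markedScale, of_apply, hx, if_true, if_false,
      one_mul, Real.sqrt_mul_self hP]
  rw [Real.sqrt_mul_self (by nlinarith [hu.1, hu.2]), Real.mul_self_sqrt (by linarith [hu.2])]
  ring

theorem one_sub_discriminant_interpolatedChain (P : Matrix X X ℝ) (M : Finset X) {u : ℝ}
    (hu : u ∈ Set.Icc (0 : ℝ) 1) (hP : ∀ x, 0 ≤ P x x) (x y : X) :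
    (1 - discriminant (interpolatedChain P M u)) x y
      = markedScale M u x * markedScale M u y * (1 - discriminant P) x y := by
  rcases eq_or_ne x y with rfl | hxy
  · simpa using one_sub_discriminant_interpolatedChain_diag P M hu (hP x)
  · simp [one_apply_ne hxy, discriminant_interpolatedChain_of_ne P M hu.2 hxy]

theorem hasDerivAt_markedScale (M : Finset X) {s : ℝ} (hs : s < 1) (x : X) :
    HasDerivAt (fun u ↦ markedScale M u x)
      (-((if x ∈ M then 1 else 0) / (2 * (1 - s))) * markedScale M s x) s := by
  by_cases hx : x ∈ M
  · have h1s : 0 < 1 - s := by linarith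
    have hsqrt : HasDerivAt (fun u ↦ √(1 - u)) (-1 / (2 * √(1 - s))) s := by
      simpa using ((hasDerivAt_id' s).const_sub 1).sqrt h1s.ne'
    simp only [markedScale, hx, if_true]
    convert hsqrt using 1
    field_simp
    rw [Real.sq_sqrt h1s.le]
  · simpa [markedScale, hx] using hasDerivAt_const s (1 : ℝ)

theorem hasDerivWithinAt_discriminant_interpolatedChain (P : Matrix X X ℝ) (M : Finset X)
    (hP : ∀ x, 0 ≤ P x x) {s : ℝ} (hs : s ∈ Set.Ico (0 : ℝ) 1) (x y : X) :
    HasDerivWithinAt (fun u ↦ discriminant (interpolatedChain P M u) x y)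
      (((if x ∈ M then 1 else 0) + (if y ∈ M then 1 else 0)) / (2 * (1 - s))
        * (1 - discriminant (interpolatedChain P M s)) x y)
      (Set.Ico 0 1) s := by
  have hentry : ∀ u ∈ Set.Ico (0 : ℝ) 1, discriminant (interpolatedChain P M u) x y
      = (1 : Matrix X X ℝ) x y
        - markedScale M u x * markedScale M u y * (1 - discriminant P) x y := by
    intro u hu
    rw [← one_sub_discriminant_interpolatedChain P M (Set.Ico_subset_Icc_self hu) hP,
      Matrix.sub_apply, sub_sub_cancel]
  have hderiv := ((hasDerivAt_markedScale M hs.2 x).mul (hasDerivAt_markedScale M hs.2 y)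
    |>.mul_const ((1 - discriminant P) x y)).const_sub ((1 : Matrix X X ℝ) x y)
  refine (hderiv.hasDerivWithinAt.congr hentry (hentry s hs)).congr_deriv ?_
  rw [one_sub_discriminant_interpolatedChain P M (Set.Ico_subset_Icc_self hs) hP]
  ring

end

theorem discriminant_derivative_anticommutator_general
    {X : Type*} [Fintype X] [DecidableEq X]
    (P : Matrix X X ℝ) (M : Finset X)
    (hnn : ∀ x y, 0 ≤ P x y)
    (D : ℝ → Matrix X X ℝ)
    (hD : ∀ u x y, D u x y = Real.sqrt
      ((if x ∈ M then (1 - u) * P x y + (if x = y then u else 0) else P x y) *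
       (if y ∈ M then (1 - u) * P y x + (if y = x then u else 0) else P y x)))
    (PiM : Matrix X X ℝ)
    (hPiM : ∀ x y, PiM x y = if x = y ∧ x ∈ M then (1:ℝ) else 0)
    (s : ℝ) (hs : s ∈ Set.Ico (0:ℝ) 1) :
    ∀ x y, HasDerivWithinAt (fun u => D u x y)
      ((1 / (2 * (1 - s))) *
        ((PiM * (1 - D s) + (1 - D s) * PiM) x y))
      (Set.Ico (0:ℝ) 1) s := by
  intro x y
  have hDeq : D = fun u ↦ discriminant (interpolatedChain P M u) := by
    ext u x y
    exact hD u x y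
  have hPiMeq : PiM = diagonal fun x ↦ if x ∈ M then 1 else 0 := by
    ext x y
    rw [hPiM, diagonal_apply, ite_and]
  subst hDeq hPiMeq
  convert hasDerivWithinAt_discriminant_interpolatedChain P M (fun x ↦ hnn x x) hs x y using 1
  rw [diagonal_mul_add_mul_diagonal_apply]
  ring

/-- the derivative of the discriminant `D(s)` of the interpolated
chain satisfies `dD/ds = (1/(2(1-s))) {Π_M, I - D(s)}` for `s ∈ [0,1)`. -/
theorem discriminant_derivative_anticommutator
    {X : Type*} [Fintype X] [DecidableEq X]
    (P : Matrix X X ℝ) (π : X → ℝ) (M : Finset X)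
    (hnn : ∀ x y, 0 ≤ P x y) (hrow : ∀ x, ∑ y, P x y = 1)
    (hπpos : ∀ x, 0 < π x)
    (hrev : ∀ x y, π x * P x y = π y * P y x)
    (D : ℝ → Matrix X X ℝ)
    (hD : ∀ u x y, D u x y = Real.sqrt
      ((if x ∈ M then (1 - u) * P x y + (if x = y then u else 0) else P x y) *
       (if y ∈ M then (1 - u) * P y x + (if y = x then u else 0) else P y x)))
    (PiM : Matrix X X ℝ)
    (hPiM : ∀ x y, PiM x y = if x = y ∧ x ∈ M then (1:ℝ) else 0)
    (s : ℝ) (hs : s ∈ Set.Ico (0:ℝ) 1) :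
    ∀ x y, HasDerivWithinAt (fun u => D u x y)
      ((1 / (2 * (1 - s))) *
        ((PiM * (1 - D s) + (1 - D s) * PiM) x y))
      (Set.Ico (0:ℝ) 1) s :=
  discriminant_derivative_anticommutator_general P M hnn D hD PiM hPiM s hs
end

section
/- Let 0 < p_M ≤ 1/2, ε₁ ≤ 1/4, and suppose p_M* satisfies 2√ε₁·p_M ≤ p_M* ≤ 2(1-√ε₁)·p_M. Set s = 1 - p_M*/(1-p_M*) and θ(s) = arcsin √(p_M/(1 - s(1-p_M))). Then cos²θ(s) · sin²θ(s) ≥ ε₁. -/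
lemma hend1 (p r : ℝ) (hp0 : 0 ≤ p) (hp : p ≤ 1/2) (hr0 : 0 ≤ r) (hr : r ≤ 1/2) :
    2*(1-p)*(1-2*r*p) - r*(1+2*r-4*r*p)^2 ≥ 0 := by
  nlinarith [mul_nonneg (sub_nonneg.2 hr) (sub_nonneg.2 hp), sq_nonneg (1-2*p), mul_nonneg (mul_nonneg (sub_nonneg.2 hr) (sq_nonneg (1-2*p))) hr0, mul_nonneg hr0 hp0, mul_nonneg (sub_nonneg.2 hr) hp0, mul_nonneg (mul_nonneg (sub_nonneg.2 hr) (sub_nonneg.2 hp)) hr0]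

lemma hend2 (p r : ℝ) (hp0 : 0 ≤ p) (hp : p ≤ 1/2) (hr0 : 0 ≤ r) (hr : r ≤ 1/2) :
    2*(1-r)*(1-p)*(1-2*(1-r)*p) - r^2*(1+2*(1-r)*(1-2*p))^2 ≥ 0 := by
  nlinarith [mul_nonneg (sub_nonneg.2 hr) (sub_nonneg.2 hp), sq_nonneg (1-2*p), mul_nonneg (mul_nonneg (sub_nonneg.2 hr) (sq_nonneg (1-2*p))) hr0, mul_nonneg hr0 hp0, mul_nonneg (sub_nonneg.2 hr) hp0, mul_nonneg (mul_nonneg (sub_nonneg.2 hr) (sub_nonneg.2 hp)) hr0, mul_nonneg (mul_nonneg (mul_nonneg (sub_nonneg.2 hr) (sub_nonneg.2 hp)) hr0) hp0, sq_nonneg ((1-2*p)*(1-2*r)), mul_nonneg (mul_nonneg hr0 hr0) (sq_nonneg (1-2*p))]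

lemma gmain (p r u : ℝ) (hp0 : 0 ≤ p) (hp : p ≤ 1/2) (hr0 : 0 ≤ r) (hr : r ≤ 1/2)
    (hu1 : 2*r*p ≤ u) (hu2 : u ≤ 2*(1-r)*p) :
    p*(1-p)*u*(1-u) - r^2*(p+u-2*p*u)^2 ≥ 0 := by
  have hg1 : p*(1-p)*(2*r*p)*(1-2*r*p) - r^2*(p+2*r*p-2*p*(2*r*p))^2 ≥ 0 := by
    nlinarith [mul_nonneg (mul_nonneg (sq_nonneg p) hr0) (hend1 p r hp0 hp hr0 hr)]
  have hg2 : p*(1-p)*(2*(1-r)*p)*(1-2*(1-r)*p) - r^2*(p+2*(1-r)*p-2*p*(2*(1-r)*p))^2 ≥ 0 := by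
    nlinarith [mul_nonneg (sq_nonneg p) (hend2 p r hp0 hp hr0 hr)]
  have h21 : (0:ℝ) ≤ 2*(1-r)*p - 2*r*p := by linarith
  have hc : (0:ℝ) ≤ p*(1-p) + r^2*(1-2*p)^2 := by nlinarith [sq_nonneg r, sq_nonneg (1-2*p)]
  have hA := mul_nonneg (sub_nonneg.2 hu2) hg1
  have hB := mul_nonneg (sub_nonneg.2 hu1) hg2
  have hC := mul_nonneg (mul_nonneg (mul_nonneg (sub_nonneg.2 hu1) (sub_nonneg.2 hu2)) h21) hc
  have key : (2*(1-r)*p - 2*r*p) * (p*(1-p)*u*(1-u) - r^2*(p+u-2*p*u)^2) ≥ 0 := by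
    have hid : (2*(1-r)*p - 2*r*p) * (p*(1-p)*u*(1-u) - r^2*(p+u-2*p*u)^2)
        = (2*(1-r)*p - u) * (p*(1-p)*(2*r*p)*(1-2*r*p) - r^2*(p+2*r*p-2*p*(2*r*p))^2)
        + (u - 2*r*p) * (p*(1-p)*(2*(1-r)*p)*(1-2*(1-r)*p) - r^2*(p+2*(1-r)*p-2*p*(2*(1-r)*p))^2)
        + (u - 2*r*p) * (2*(1-r)*p - u) * (2*(1-r)*p - 2*r*p) * (p*(1-p) + r^2*(1-2*p)^2) := by
      ring
    rw [hid]
    exact add_nonneg (add_nonneg hA hB) hC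
  rcases eq_or_lt_of_le h21 with h | h
  · have hu : u = 2*r*p := le_antisymm (by linarith) hu1
    rw [hu]; linarith [hg1]
  · have h0 : (2*(1-r)*p - 2*r*p) * 0 ≤ (2*(1-r)*p - 2*r*p) * (p*(1-p)*u*(1-u) - r^2*(p+u-2*p*u)^2) := by
      rw [mul_zero]; exact key
    exact le_of_mul_le_mul_left h0 h

/-- Fact 3 of the paper: if `2√ε₁ p_M ≤ p_M* ≤ 2(1-√ε₁)p_M`
with `0 < p_M ≤ 1/2` and `ε₁ ≤ 1/4`, then for `s = 1 - p_M*/(1-p_M*)` and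
`θ(s) = arcsin √(p_M/(1-s(1-p_M)))` one has `cos²θ(s) sin²θ(s) ≥ ε₁`. -/
theorem cos_sin_overlap_bound
    (pM pMstar ε₁ : ℝ)
    (hpM0 : 0 < pM) (hpM : pM ≤ 1 / 2)
    (hε0 : 0 ≤ ε₁) (hε : ε₁ ≤ 1 / 4)
    (hlow : 2 * Real.sqrt ε₁ * pM ≤ pMstar)
    (hhigh : pMstar ≤ 2 * (1 - Real.sqrt ε₁) * pM) :
    let s : ℝ := 1 - pMstar / (1 - pMstar)
    let θ : ℝ := Real.arcsin (Real.sqrt (pM / (1 - s * (1 - pM))))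
    Real.cos θ ^ 2 * Real.sin θ ^ 2 ≥ ε₁ := by
  intro s θ
  rcases eq_or_lt_of_le hε0 with h0 | hεpos
  · rw [← h0]; positivity
  set r : ℝ := Real.sqrt ε₁ with hrdef
  have hr2 : r ^ 2 = ε₁ := Real.sq_sqrt hε0
  have hrpos : 0 < r := Real.sqrt_pos.2 hεpos
  have hrhalf : r ≤ 1/2 := by
    have h14 : Real.sqrt (1/4) = 1/2 := by
      rw [show (1:ℝ)/4 = (1/2)^2 by norm_num, Real.sqrt_sq (by norm_num)]
    calc r ≤ Real.sqrt (1/4) := Real.sqrt_le_sqrt hε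
    _ = 1/2 := h14
  set u : ℝ := pMstar with hudef
  have hu0 : 0 < u := lt_of_lt_of_le (by positivity) hlow
  have hu1 : u < 1 := by nlinarith
  have hu1' : (0:ℝ) < 1 - u := by linarith
  set D : ℝ := pM + u - 2 * pM * u with hDdef
  have hD : 0 < D := by nlinarith [mul_pos hpM0 hu1']
  have hs : 1 - s * (1 - pM) = D / (1 - u) := by
    show 1 - (1 - u / (1 - u)) * (1 - pM) = D / (1 - u)
    field_simp
    ring
  have harg : pM / (1 - s * (1 - pM)) = pM * (1 - u) / D := by
    rw [hs]
    field_simp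
  have harg0 : 0 ≤ pM * (1 - u) / D := by positivity
  have harg1 : pM * (1 - u) / D ≤ 1 := by
    rw [div_le_one hD]
    nlinarith [mul_nonneg (sub_nonneg.2 hpM) hu0.le]
  have hsin : Real.sin θ = Real.sqrt (pM * (1 - u) / D) := by
    show Real.sin (Real.arcsin _) = _
    rw [harg]
    exact Real.sin_arcsin (le_trans (by norm_num) (Real.sqrt_nonneg _)) (Real.sqrt_le_one.2 harg1)
  have hsin2 : Real.sin θ ^ 2 = pM * (1 - u) / D := by
    rw [hsin, Real.sq_sqrt harg0]
  have hcos2 : Real.cos θ ^ 2 = 1 - pM * (1 - u) / D := by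
    have := Real.sin_sq_add_cos_sq θ
    linarith [hsin2]
  rw [ge_iff_le, hsin2, hcos2, ← hr2]
  have h2 : (1 - pM * (1 - u) / D) * (pM * (1 - u) / D) = (pM * (1 - pM) * u * (1 - u)) / D ^ 2 := by
    field_simp
    ring
  rw [h2, le_div_iff₀ (pow_pos hD 2)]
  have hmain := gmain pM r u hpM0.le hpM hrpos.le hrhalf hlow hhigh
  rw [hDdef]
  nlinarith [hmain]
end
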